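/- With r-bit quantized phases, for any h ∈ ℂ^N the quantized phase-aligned beamformer w with w_n = (1/√N) e^{jφ_n}, where φ_n is the Φ_r-quantization of arg(h_n), satisfies |w^H h| ≥ cos(π/2^r) · (1/√N) Σ_n |h_n|; i.e., quantized beamforming achieves at least a fraction cos(π/2^r) of the optimal analog beamforming amplitude. -/

import Mathlib

open scoped BigOperators ComplexConjugate

/-! Writing `h n = |h n| e^{i arg (h n)}`, the real part of `conj (e^{iφ n}) h n` is
`|h n| cos (arg (h n) - φ n)`, and this cosine is at least `cos (π/2^r)` because the quantization
error is at most `π/2^r` modulo `2π`. Summing and bounding `‖·‖` below by the real part gives the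
claim; the common factor `1/√N` is nonnegative and factors out. -/

open Complex in
theorem Complex.re_conj_exp_mul_I_mul (z : ℂ) (θ : ℝ) :
    (conj (exp (I * θ)) * z).re = ‖z‖ * Real.cos (arg z - θ) := by
  have hconj : conj (exp (I * θ)) = exp ((-θ : ℝ) * I) := by
    rw [← exp_conj, map_mul, conj_ofReal, conj_I, ofReal_neg, neg_mul_comm, mul_comm]
  rw [hconj, mul_re, exp_ofReal_mul_I_re, exp_ofReal_mul_I_im, ← norm_mul_cos_arg,
    ← norm_mul_sin_arg, Real.cos_sub, Real.cos_neg, Real.sin_neg]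
  ring

theorem Real.cos_le_cos_of_abs_sub_int_mul_two_pi_le {x δ : ℝ} (m : ℤ) (hδ : δ ≤ Real.pi)
    (hx : |x - 2 * Real.pi * m| ≤ δ) : Real.cos δ ≤ Real.cos x := by
  calc Real.cos δ ≤ Real.cos |x - 2 * Real.pi * m| :=
        Real.cos_le_cos_of_nonneg_of_le_pi (abs_nonneg _) hδ hx
    _ = Real.cos x := by
        rw [Real.cos_abs, mul_comm, Real.cos_sub_int_mul_two_pi]

open Complex in
theorem Complex.cos_mul_sum_norm_le_norm_sum_conj_exp_mul {ι : Type*} (s : Finset ι)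
    (z : ι → ℂ) (θ : ι → ℝ) {δ : ℝ} (hδ : δ ≤ Real.pi)
    (hclose : ∀ i ∈ s, ∃ m : ℤ, |arg (z i) - θ i - 2 * Real.pi * m| ≤ δ) :
    Real.cos δ * ∑ i ∈ s, ‖z i‖ ≤ ‖∑ i ∈ s, conj (exp (I * θ i)) * z i‖ :=
  calc Real.cos δ * ∑ i ∈ s, ‖z i‖
      = ∑ i ∈ s, ‖z i‖ * Real.cos δ := by rw [Finset.mul_sum]; simp only [mul_comm]
    _ ≤ ∑ i ∈ s, ‖z i‖ * Real.cos (arg (z i) - θ i) := by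
        refine Finset.sum_le_sum fun i hi => ?_
        obtain ⟨m, hm⟩ := hclose i hi
        exact mul_le_mul_of_nonneg_left
          (Real.cos_le_cos_of_abs_sub_int_mul_two_pi_le m hδ hm) (norm_nonneg _)
    _ = (∑ i ∈ s, conj (exp (I * θ i)) * z i).re := by
        simp only [re_sum, re_conj_exp_mul_I_mul]
    _ ≤ ‖∑ i ∈ s, conj (exp (I * θ i)) * z i‖ := re_le_norm _

theorem quantized_beamforming_bound_general (r N : ℕ) (h : Fin N → ℂ)
    (φ : Fin N → ℝ)
    (hφclose : ∀ n, ∃ m : ℤ,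
      |(h n).arg - φ n - 2 * Real.pi * m| ≤ Real.pi / 2 ^ r) :
    ‖∑ n, conj ((((1 : ℝ) / Real.sqrt N : ℝ) : ℂ)
        * Complex.exp (Complex.I * (φ n : ℂ))) * h n‖
      ≥ Real.cos (Real.pi / 2 ^ r) * ((1 / Real.sqrt N) * ∑ n, ‖h n‖) := by
  set c : ℝ := 1 / Real.sqrt N
  have hc : 0 ≤ c := by positivity
  have hδ : Real.pi / 2 ^ r ≤ Real.pi :=
    div_le_self Real.pi_pos.le (one_le_pow₀ one_le_two)
  have hbound := Complex.cos_mul_sum_norm_le_norm_sum_conj_exp_mul Finset.univ h φ hδ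
    fun n _ => hφclose n
  calc Real.cos (Real.pi / 2 ^ r) * (c * ∑ n, ‖h n‖)
      = c * (Real.cos (Real.pi / 2 ^ r) * ∑ n, ‖h n‖) := by ring
    _ ≤ c * ‖∑ n, conj (Complex.exp (Complex.I * (φ n : ℂ))) * h n‖ :=
        mul_le_mul_of_nonneg_left hbound hc
    _ = ‖∑ n, conj ((c : ℂ) * Complex.exp (Complex.I * (φ n : ℂ))) * h n‖ := by
        simp only [map_mul, Complex.conj_ofReal, mul_assoc, ← Finset.mul_sum, norm_mul,
          Complex.norm_of_nonneg hc]

/-- With `r`-bit quantized phases `φ n ∈ Φ_r` chosen within angular distance `π/2^r`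
of `arg (h n)`, the quantized beamformer `w n = (1/√N) e^{jφ n}` satisfies
`|wᴴ h| ≥ cos(π/2^r) · (1/√N) ∑ |h n|`. -/
theorem quantized_beamforming_bound (r N : ℕ) (hr : 1 ≤ r) (h : Fin N → ℂ)
    (φ : Fin N → ℝ)
    (hφmem : ∀ n, ∃ k : ℕ, k < 2 ^ r ∧ φ n = 2 * Real.pi * k / 2 ^ r)
    (hφclose : ∀ n, ∃ m : ℤ,
      |(h n).arg - φ n - 2 * Real.pi * m| ≤ Real.pi / 2 ^ r) :
    ‖∑ n, conj ((((1 : ℝ) / Real.sqrt N : ℝ) : ℂ)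
        * Complex.exp (Complex.I * (φ n : ℂ))) * h n‖
      ≥ Real.cos (Real.pi / 2 ^ r) * ((1 / Real.sqrt N) * ∑ n, ‖h n‖) :=
  quantized_beamforming_bound_general r N h φ hφclose
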